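/- Let u_h : M_h → ℝ be a discrete function (h = 1/n) whose discrete Hessian H_h u_h(x) is positive semidefinite at every interior mesh point, and suppose |u_h(x)| ≤ M₀ for all x ∈ M_h, for some M₀ > 0. Then: (a) along every coordinate line, u_h satisfies the one-dimensional discrete convexity inequalities, i.e. (u_h(x + k h e_i) − u_h(x + (k−1) h e_i))/h ≤ (u_h(x + (k+1) h e_i) − u_h(x + k h e_i))/h whenever the three points lie in M_h and the middle point is interior; and (b) for every ε > 0 there exists a constant C depending only on M₀ and ε (not on u_h or h) such that |D_{h,i}u_h(x)| ≤ C for all i and all mesh points x ∈ M_h with dist(x, ∂Q) > ε where the difference is defined. -/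

import Mathlib

/-!
Positive semidefinite matrices have nonnegative diagonal entries, so the diagonal of the
discrete Hessian makes `u_h` a convex sequence along every coordinate line. The slopes of a
convex sequence increase, so if it is bounded by `M₀` on `{-m, …, m}` then
`m * |g 1 - g 0| ≤ 2 * M₀`. A mesh point at distance more than `ε` from `∂Q` has `m = ⌊ε n⌋`
interior mesh points on either side in each coordinate direction, giving
`|D_{h,i} u_h (x)| ≤ 2 M₀ n / m ≤ 4 M₀ / ε`; when `m = 0` the trivial bound
`2 M₀ n ≤ 2 M₀ / ε` suffices.
-/

open Set Filter Metric
open scoped Classical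

namespace Stmt18

variable (d : ℕ)

/-- The cube `Q = [0,1]^d`. -/
def Q : Set (Fin d → ℝ) := Icc 0 1

/-- The canonical basis vector `e i`. -/
def ee (i : Fin d) : Fin d → ℝ := Pi.single i 1

/-- `x` belongs to the mesh `M_h`, i.e. `x ∈ Q` and `x = h • z` for some `z ∈ ℤ^d`. -/
def onMesh (h : ℝ) (x : Fin d → ℝ) : Prop :=
  x ∈ Icc (0 : Fin d → ℝ) 1 ∧ ∀ i, ∃ z : ℤ, x i = h * z

/-- `x` is an interior mesh point: `x ∈ M_h ∩ (0,1)^d`. -/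
def inMesh (h : ℝ) (x : Fin d → ℝ) : Prop :=
  onMesh d h x ∧ ∀ i, 0 < x i ∧ x i < 1

/-- First order forward finite difference `D_{h,i} u (x)`. -/
noncomputable def D1 (h : ℝ) (u : (Fin d → ℝ) → ℝ) (x : Fin d → ℝ) (i : Fin d) : ℝ :=
  (u (x + h • ee d i) - u x) / h

/-- Second order finite differences `D²_{h,ij} u (x)`. -/
noncomputable def D2 (h : ℝ) (u : (Fin d → ℝ) → ℝ) (x : Fin d → ℝ) (i j : Fin d) : ℝ :=
  if i = j then (u (x + h • ee d i) - 2 * u x + u (x - h • ee d i)) / h ^ 2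
  else
    (u (x + h • ee d i + h • ee d j) - u (x - h • ee d i + h • ee d j) -
        u (x + h • ee d i - h • ee d j) + u (x - h • ee d i - h • ee d j)) /
      (4 * h ^ 2)

/-- The discrete Hessian `H_h u (x)`. -/
noncomputable def Hd (h : ℝ) (u : (Fin d → ℝ) → ℝ) (x : Fin d → ℝ) :
    Matrix (Fin d) (Fin d) ℝ :=
  Matrix.of fun i j => D2 d h u x i j

/-- First partial derivative `∂_i u` (derivative taken within `Q`). -/
noncomputable def pd (u : (Fin d → ℝ) → ℝ) (i : Fin d) (y : Fin d → ℝ) : ℝ :=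
  fderivWithin ℝ u (Q d) y (ee d i)

end Stmt18

open Stmt18

theorem ball_infDist_frontier_subset_interior {E : Type*} [NormedAddCommGroup E]
    [NormedSpace ℝ E] {s : Set E} {x : E} (hx : x ∈ s) :
    ball x (infDist x (frontier s)) ⊆ interior s := by
  have hball : ∀ y ∈ ball x (infDist x (frontier s)), y ∈ closure s → y ∈ interior s :=
    fun y hy hys => by_contra fun hyi => disjoint_ball_infDist.le_bot ⟨hy, hys, hyi⟩
  rcases (ball x (infDist x (frontier s))).eq_empty_or_nonempty with hempty | hne
  · simp [hempty]
  have hxball : x ∈ ball x (infDist x (frontier s)) := mem_ball_self (nonempty_ball.1 hne)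
  refine (convex_ball x _).isPreconnected.subset_of_closure_inter_subset isOpen_interior
    ⟨x, hxball, hball x hxball (subset_closure hx)⟩ ?_
  rintro y ⟨hy_cl, hy⟩
  exact hball y hy (closure_mono interior_subset hy_cl)

theorem mul_slope_le_of_convex (g : ℤ → ℝ) (m : ℕ)
    (hconv : ∀ k : ℤ, 0 < k → k < m → g k - g (k - 1) ≤ g (k + 1) - g k) :
    m * (g 1 - g 0) ≤ g m - g 0 := by
  have hslope : ∀ k : ℕ, k < m → g 1 - g 0 ≤ g (k + 1) - g k := by
    intro k
    induction k with
    | zero => simp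
    | succ k ih =>
      intro hk
      have := hconv (k + 1) (by omega) (by omega)
      push_cast
      simp only [add_sub_cancel_right] at this
      linarith [ih (by omega)]
  calc (m : ℝ) * (g 1 - g 0) = ∑ _k ∈ Finset.range m, (g 1 - g 0) := by
        rw [Finset.sum_const, Finset.card_range, nsmul_eq_mul]
    _ ≤ ∑ k ∈ Finset.range m, (g ((k + 1 : ℕ) : ℤ) - g k) :=
      Finset.sum_le_sum fun k hk => by exact_mod_cast hslope k (Finset.mem_range.1 hk)
    _ = g m - g 0 := Finset.sum_range_sub (fun k : ℕ => g k) m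

theorem natCast_mul_abs_slope_le_of_convex (g : ℤ → ℝ) {m : ℕ} (hm : 0 < m) {M : ℝ}
    (hconv : ∀ k : ℤ, -m < k → k < m → g k - g (k - 1) ≤ g (k + 1) - g k)
    (hbd : ∀ k : ℤ, |k| ≤ m → |g k| ≤ M) :
    m * |g 1 - g 0| ≤ 2 * M := by
  have hright := mul_slope_le_of_convex g m fun k hk hkm => hconv k (by omega) hkm
  -- the reflected sequence `k ↦ g (-k)` is convex as well
  have hleft := mul_slope_le_of_convex (fun k => g (-k)) m fun k hk hkm => by
    have := hconv (-k) (by omega) (by omega)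
    simp only [neg_sub, neg_add_eq_sub, ← neg_add'] at this ⊢
    linarith
  have hzero := hconv 0 (by omega) (by omega)
  have hbm := abs_le.1 (hbd m (by simp))
  have hb0 := abs_le.1 (hbd 0 (by simp))
  have hbm' := abs_le.1 (hbd (-m) (by simp))
  simp only [neg_zero, zero_sub, zero_add] at hleft hzero
  have hmono := mul_le_mul_of_nonneg_left hzero (Nat.cast_nonneg m)
  rw [← abs_of_nonneg (Nat.cast_nonneg (α := ℝ) m), ← abs_mul, abs_le]
  constructor <;> linarith

theorem natCast_mul_le_of_floor_mul_le (n : ℕ) {ε a B : ℝ} (hε : 0 < ε) (ha : 0 ≤ a)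
    (haB : a ≤ B) (hfloor : 0 < ⌊ε * n⌋₊ → ⌊ε * n⌋₊ * a ≤ B) :
    n * a ≤ 2 * B / ε := by
  rw [le_div_iff₀ hε]
  rcases Nat.eq_zero_or_pos ⌊ε * n⌋₊ with hm | hm
  · have hlt : ε * n < 1 := by simpa [hm] using Nat.lt_floor_add_one (ε * n)
    nlinarith
  · have hlt := Nat.lt_floor_add_one (ε * n)
    have hm1 : (1 : ℝ) ≤ ⌊ε * n⌋₊ := by exact_mod_cast hm
    nlinarith [hfloor hm]

namespace Stmt18

variable {d : ℕ}

theorem interior_Q : interior (Q d) = Set.pi univ fun _ => Ioo 0 1 := by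
  rw [Q, ← pi_univ_Icc, interior_pi_set finite_univ]
  simp only [Pi.zero_apply, Pi.one_apply, interior_Icc]

theorem add_smul_ee_apply (x : Fin d → ℝ) (c : ℝ) (i j : Fin d) :
    (x + c • ee d i) j = x j + if j = i then c else 0 := by
  by_cases hj : j = i <;> simp [ee, hj]

theorem inMesh_add_smul_ee {h ε : ℝ} (hh : 0 < h) {x : Fin d → ℝ} (hx : onMesh d h x)
    (hε : ε < infDist x (frontier (Q d))) (i : Fin d) {k : ℤ} (hk : |k| * h ≤ ε) :
    inMesh d h (x + (k * h) • ee d i) := by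
  have hdist : dist (x + (k * h) • ee d i) x < infDist x (frontier (Q d)) := by
    rw [dist_self_add_left, ee, ← Pi.single_smul, Pi.norm_single, smul_eq_mul, mul_one,
      Real.norm_eq_abs, abs_mul, abs_of_pos hh, ← Int.cast_abs]
    linarith
  have hint := ball_infDist_frontier_subset_interior (s := Q d) hx.1 (mem_ball.2 hdist)
  rw [interior_Q] at hint
  refine ⟨⟨⟨fun j => (hint j trivial).1.le, fun j => (hint j trivial).2.le⟩, fun j => ?_⟩,
    fun j => hint j trivial⟩
  obtain ⟨z, hz⟩ := hx.2 j
  rw [add_smul_ee_apply, hz]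
  by_cases hj : j = i
  · exact ⟨z + k, by simp [hj]; ring⟩
  · exact ⟨z, by simp [hj]⟩

theorem sub_le_sub_of_posSemidef_Hd {h : ℝ} (hh : h ≠ 0) {u : (Fin d → ℝ) → ℝ}
    {x : Fin d → ℝ} (hpsd : (Hd d h u x).PosSemidef) (i : Fin d) :
    u x - u (x - h • ee d i) ≤ u (x + h • ee d i) - u x := by
  have hdiag : 0 ≤ (u (x + h • ee d i) - 2 * u x + u (x - h • ee d i)) / h ^ 2 := by
    simpa [Hd, D2] using hpsd.diag_nonneg (i := i)
  have := mul_nonneg hdiag (sq_nonneg h)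
  rw [div_mul_cancel₀ _ (pow_ne_zero 2 hh)] at this
  linarith

theorem natCast_mul_abs_sub_le_of_posSemidef_Hd {h ε M : ℝ} (hh : 0 < h)
    {u : (Fin d → ℝ) → ℝ} (hpsd : ∀ y, inMesh d h y → (Hd d h u y).PosSemidef)
    (hbd : ∀ y, onMesh d h y → |u y| ≤ M) {x : Fin d → ℝ} (hx : onMesh d h x)
    (hε : ε < infDist x (frontier (Q d))) (i : Fin d) {m : ℕ} (hm : 0 < m)
    (hmh : m * h ≤ ε) :
    m * |u (x + h • ee d i) - u x| ≤ 2 * M := by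
  have hmem : ∀ k : ℤ, |k| ≤ m → inMesh d h (x + (k * h) • ee d i) := fun k hk =>
    inMesh_add_smul_ee hh hx hε i
      ((mul_le_mul_of_nonneg_right (by exact_mod_cast hk) hh.le).trans hmh)
  have hconv : ∀ k : ℤ, -m < k → k < m →
      u (x + (k * h) • ee d i) - u (x + ((k - 1 : ℤ) * h) • ee d i) ≤
        u (x + ((k + 1 : ℤ) * h) • ee d i) - u (x + (k * h) • ee d i) := by
    intro k hk hkm
    have := sub_le_sub_of_posSemidef_Hd hh.ne'
      (hpsd _ (hmem k (abs_le.2 ⟨by omega, by omega⟩))) i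
    have hsucc : x + (k * h) • ee d i + h • ee d i = x + ((k + 1 : ℤ) * h) • ee d i := by
      push_cast; module
    have hpred : x + (k * h) • ee d i - h • ee d i = x + ((k - 1 : ℤ) * h) • ee d i := by
      push_cast; module
    rwa [hsucc, hpred] at this
  simpa using natCast_mul_abs_slope_le_of_convex (fun k : ℤ => u (x + (k * h) • ee d i)) hm
    hconv fun k hk => hbd _ (hmem k hk).1

end Stmt18

theorem stmt_18_general (d : ℕ) (M₀ : ℝ) :
    (∀ n : ℕ, 0 < n → ∀ uh : (Fin d → ℝ) → ℝ,
      (∀ x, inMesh d (1 / n) x → (Hd d (1 / n) uh x).PosSemidef) →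
      (∀ x, onMesh d (1 / n) x → |uh x| ≤ M₀) →
      ∀ x, ∀ i : Fin d,
        onMesh d (1 / n) (x - (1 / n : ℝ) • ee d i) →
        onMesh d (1 / n) (x + (1 / n : ℝ) • ee d i) →
        inMesh d (1 / n) x →
        (uh x - uh (x - (1 / n : ℝ) • ee d i)) / (1 / n : ℝ)
          ≤ (uh (x + (1 / n : ℝ) • ee d i) - uh x) / (1 / n : ℝ)) ∧
    (∀ ε : ℝ, 0 < ε → ∃ C : ℝ,
      ∀ n : ℕ, 0 < n → ∀ uh : (Fin d → ℝ) → ℝ,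
        (∀ x, inMesh d (1 / n) x → (Hd d (1 / n) uh x).PosSemidef) →
        (∀ x, onMesh d (1 / n) x → |uh x| ≤ M₀) →
        ∀ x, ∀ i : Fin d,
          onMesh d (1 / n) x →
          onMesh d (1 / n) (x + (1 / n : ℝ) • ee d i) →
          ε < infDist x (frontier (Q d)) →
          |D1 d (1 / n) uh x i| ≤ C) := by
  refine ⟨fun n hn uh hpsd _ x i _ _ hx => ?_, fun ε hε => ⟨4 * M₀ / ε, ?_⟩⟩
  · have hh : (0 : ℝ) < 1 / n := by positivity
    exact div_le_div_of_nonneg_right (sub_le_sub_of_posSemidef_Hd hh.ne' (hpsd x hx) i) hh.le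
  intro n hn uh hpsd hbd x i hx hx' hdist
  have hh : (0 : ℝ) < 1 / n := by positivity
  have hD1 : |D1 d (1 / n) uh x i| = n * |uh (x + (1 / n : ℝ) • ee d i) - uh x| := by
    rw [D1, abs_div, abs_of_pos hh]
    field_simp
  rw [hD1, show 4 * M₀ / ε = 2 * (2 * M₀) / ε by ring]
  refine natCast_mul_le_of_floor_mul_le n hε (abs_nonneg _) ?_ fun hm => ?_
  · linarith [abs_sub (uh (x + (1 / n : ℝ) • ee d i)) (uh x), hbd _ hx', hbd x hx]
  · refine natCast_mul_abs_sub_le_of_posSemidef_Hd hh hpsd hbd hx hdist i hm ?_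
    calc (⌊ε * n⌋₊ : ℝ) * (1 / n) ≤ ε * n * (1 / n) := by
          gcongr; exact Nat.floor_le (by positivity)
      _ = ε := by field_simp

/-- For a discrete function `u_h` on `M_h` (`h = 1/n`) with positive
semidefinite discrete Hessian at every interior mesh point and `|u_h| ≤ M₀`:
(a) along every coordinate line `u_h` satisfies the one-dimensional discrete convexity
inequalities; and (b) for every `ε > 0` there is a constant `C` depending only on `M₀`
and `ε` (not on `u_h` nor on `h`) bounding `|D_{h,i} u_h (x)|` at all mesh points at
distance more than `ε` from the boundary where the difference is defined. -/
theorem stmt_18 (d : ℕ) (hd : 0 < d) (M₀ : ℝ) (hM₀ : 0 < M₀) :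
    (∀ n : ℕ, 0 < n → ∀ uh : (Fin d → ℝ) → ℝ,
      (∀ x, inMesh d (1 / n) x → (Hd d (1 / n) uh x).PosSemidef) →
      (∀ x, onMesh d (1 / n) x → |uh x| ≤ M₀) →
      ∀ x, ∀ i : Fin d,
        onMesh d (1 / n) (x - (1 / n : ℝ) • ee d i) →
        onMesh d (1 / n) (x + (1 / n : ℝ) • ee d i) →
        inMesh d (1 / n) x →
        (uh x - uh (x - (1 / n : ℝ) • ee d i)) / (1 / n : ℝ)
          ≤ (uh (x + (1 / n : ℝ) • ee d i) - uh x) / (1 / n : ℝ)) ∧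
    (∀ ε : ℝ, 0 < ε → ∃ C : ℝ,
      ∀ n : ℕ, 0 < n → ∀ uh : (Fin d → ℝ) → ℝ,
        (∀ x, inMesh d (1 / n) x → (Hd d (1 / n) uh x).PosSemidef) →
        (∀ x, onMesh d (1 / n) x → |uh x| ≤ M₀) →
        ∀ x, ∀ i : Fin d,
          onMesh d (1 / n) x →
          onMesh d (1 / n) (x + (1 / n : ℝ) • ee d i) →
          ε < infDist x (frontier (Q d)) →
          |D1 d (1 / n) uh x i| ≤ C) :=
  stmt_18_general d M₀
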